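/- arXiv:2409.06529 — 2 statements merged into one kernel-verified Lean document; each statement's English description precedes it below -/
import Mathlib

section
/- For real numbers 0 < x < y, tanh(x)·tanh(y) < tanh((x+y)/2)², i.e., the function log∘tanh is strictly concave on positive reals in the sense of midpoint concavity. -/
/-!
Writing `C = cosh (x + y)` and `D = cosh (x - y)`, product-to-sum formulas give
`tanh x * tanh y = (C - D) / (C + D)`, and the same identity at `x = y = (x + y) / 2` gives
`tanh ((x + y) / 2) ^ 2 = (C - 1) / (C + 1)`. Since `t ↦ (C - t) / (C + t)` is strictly
decreasing and `D > 1` for `x ≠ y`, the inequality follows.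
-/

namespace Real

theorem tanh_mul_tanh (x y : ℝ) :
    tanh x * tanh y = (cosh (x + y) - cosh (x - y)) / (cosh (x + y) + cosh (x - y)) := by
  have hx := cosh_pos x
  have hy := cosh_pos y
  rw [tanh_eq_sinh_div_cosh, tanh_eq_sinh_div_cosh, cosh_add, cosh_sub]
  field_simp
  ring

end Real

theorem sub_div_add_lt_sub_div_add {a b c : ℝ} (ha : 0 < a) (hab : 0 < a + b) (hbc : b < c) :
    (a - c) / (a + c) < (a - b) / (a + b) := by
  rw [div_lt_div_iff₀ (by linarith) hab]
  nlinarith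

theorem tanh_mul_tanh_lt_tanh_avg_sq_general (x y : ℝ) (hxy : x < y) :
    Real.tanh x * Real.tanh y < Real.tanh ((x + y) / 2) ^ 2 := by
  have hD : Real.cosh 0 < Real.cosh (x - y) := by
    rw [Real.cosh_zero, Real.one_lt_cosh]
    exact sub_ne_zero.mpr hxy.ne
  calc Real.tanh x * Real.tanh y
      = (Real.cosh (x + y) - Real.cosh (x - y)) / (Real.cosh (x + y) + Real.cosh (x - y)) :=
        Real.tanh_mul_tanh x y
    _ < (Real.cosh (x + y) - Real.cosh 0) / (Real.cosh (x + y) + Real.cosh 0) :=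
        sub_div_add_lt_sub_div_add (Real.cosh_pos _) (by positivity) hD
    _ = Real.tanh ((x + y) / 2) ^ 2 := by
        rw [sq, Real.tanh_mul_tanh, add_halves, sub_self]

/-- Strict midpoint concavity of `log ∘ tanh` on positive reals:
for `0 < x < y`, `tanh x * tanh y < tanh ((x+y)/2) ^ 2`. -/
theorem tanh_mul_tanh_lt_tanh_avg_sq (x y : ℝ) (hx : 0 < x) (hxy : x < y) :
    Real.tanh x * Real.tanh y < Real.tanh ((x + y) / 2) ^ 2 :=
  tanh_mul_tanh_lt_tanh_avg_sq_general x y hxy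
end

section
/- Let T be a spherical triangle contained in an open hemisphere of the unit sphere, with side lengths a, b, c, semiperimeter s = (a+b+c)/2, and area S (equal to the angle excess α+β+γ−π). Then tan²(S/4) = tan(s/2)·tan((s−a)/2)·tan((s−b)/2)·tan((s−c)/2). -/
/-!
Let `A, B, C` be the angles opposite the sides `a, b, c` and `E = A + B + C - π`. Put `x = s - a`,
`y = s - b`, `z = s - c`, so that `a = y + z`, `b = z + x`, `c = x + y` and `s = x + y + z`; the
triangle inequality through the antipode of a vertex gives `s ≤ π`. The spherical law of cosines
gives the half-angle formulas `cos² (A/2) = sin s sin x / (sin b sin c)` and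
`sin² (A/2) = sin y sin z / (sin b sin c)`, and from them Delambre's analogies for `(A + B)/2`.
Since `E/4 = ((A + B)/2 - (π - C)/2)/2`, the identity
`tan ((P - Q)/2) = (sin P - sin Q) / (cos P + cos Q)`, Delambre's analogies and sum-to-product
formulas yield `tan (E/4) tan (C/2) = sin (x/2) sin (y/2) / (cos (s/2) cos (z/2))`. Squaring and
inserting `tan² (C/2) = sin x sin y / (sin s sin z)` gives Lhuilier's formula.
-/
open Real

/-- Spherical (great-circle) distance between points of the unit sphere in `ℝ³`. -/
noncomputable def sdist (u v : EuclideanSpace ℝ (Fin 3)) : ℝ :=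
  Real.arccos (inner ℝ u v : ℝ)

/-- The interior angle at the (middle) vertex `v` of the spherical triangle `uvw`,
defined via the spherical law of cosines. -/
noncomputable def sangle (u v w : EuclideanSpace ℝ (Fin 3)) : ℝ :=
  Real.arccos ((Real.cos (sdist u w) - Real.cos (sdist v u) * Real.cos (sdist v w)) /
    (Real.sin (sdist v u) * Real.sin (sdist v w)))

lemma sdist_comm (u v : EuclideanSpace ℝ (Fin 3)) : sdist u v = sdist v u := by
  rw [sdist, sdist, real_inner_comm]

lemma sdist_eq_angle {u v : EuclideanSpace ℝ (Fin 3)} (hu : ‖u‖ = 1) (hv : ‖v‖ = 1) :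
    sdist u v = InnerProductGeometry.angle u v := by
  rw [sdist, InnerProductGeometry.angle, hu, hv, mul_one, div_one]

lemma sdist_add_sdist_add_sdist_le_two_pi {u v w : EuclideanSpace ℝ (Fin 3)}
    (hu : ‖u‖ = 1) (hv : ‖v‖ = 1) (hw : ‖w‖ = 1) :
    sdist u v + sdist v w + sdist w u ≤ 2 * π := by
  have h := InnerProductGeometry.angle_le_angle_add_angle v (-u) w
  rw [InnerProductGeometry.angle_neg_right, InnerProductGeometry.angle_neg_left,
    InnerProductGeometry.angle_comm v u] at h
  rw [sdist_eq_angle hu hv, sdist_eq_angle hv hw, sdist_eq_angle hw hu,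
    InnerProductGeometry.angle_comm w u]
  linarith

lemma tan_sub_div_two {p q : ℝ} (h : cos p + cos q ≠ 0) :
    tan ((p - q) / 2) = (sin p - sin q) / (cos p + cos q) := by
  rw [cos_add_cos] at h ⊢
  rw [sin_sub_sin, tan_eq_sin_div_cos]
  have h₁ : cos ((p + q) / 2) ≠ 0 := fun h' => h (by rw [h']; ring)
  field_simp

lemma sin_add_sin_sub_sin_add (x y : ℝ) :
    sin x + sin y - sin (x + y) = 4 * sin (x / 2) * sin (y / 2) * sin ((x + y) / 2) := by
  obtain ⟨p, rfl⟩ : ∃ p, x = 2 * p := ⟨x / 2, by ring⟩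
  obtain ⟨q, rfl⟩ : ∃ q, y = 2 * q := ⟨y / 2, by ring⟩
  rw [show 2 * p / 2 = p by ring, show 2 * q / 2 = q by ring,
    show (2 * p + 2 * q) / 2 = p + q by ring, show 2 * p + 2 * q = 2 * (p + q) by ring]
  simp only [sin_two_mul, sin_add, cos_add]
  linear_combination (-2 * sin p * cos p) * sin_sq_add_cos_sq q +
    (-2 * sin q * cos q) * sin_sq_add_cos_sq p

lemma sin_add_sub_sin_add_sin (w z : ℝ) :
    sin (w + z) - sin z + sin w = 4 * cos ((w + z) / 2) * cos (z / 2) * sin (w / 2) := by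
  obtain ⟨p, rfl⟩ : ∃ p, w = 2 * p := ⟨w / 2, by ring⟩
  obtain ⟨q, rfl⟩ : ∃ q, z = 2 * q := ⟨z / 2, by ring⟩
  rw [show 2 * p / 2 = p by ring, show 2 * q / 2 = q by ring,
    show (2 * p + 2 * q) / 2 = p + q by ring, show 2 * p + 2 * q = 2 * (p + q) by ring]
  simp only [sin_two_mul, sin_add, cos_add]
  linear_combination (2 * sin q * cos q) * sin_sq_add_cos_sq p -
    (2 * sin p * cos p) * sin_sq_add_cos_sq q

noncomputable def angleOpposite (a b c : ℝ) : ℝ :=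
  arccos ((cos a - cos b * cos c) / (sin b * sin c))

lemma angleOpposite_nonneg (a b c : ℝ) : 0 ≤ angleOpposite a b c := arccos_nonneg _

lemma angleOpposite_le_pi (a b c : ℝ) : angleOpposite a b c ≤ π := arccos_le_pi _

section HalfAngle

variable {x y z : ℝ}

lemma one_add_cosLaw_div_two (hD : sin (z + x) * sin (x + y) ≠ 0) :
    (1 + (cos (y + z) - cos (z + x) * cos (x + y)) / (sin (z + x) * sin (x + y))) / 2 =
      sin (x + y + z) * sin x / (sin (z + x) * sin (x + y)) := by
  have h : cos (y + z) - cos (z + x + (x + y)) = 2 * (sin (x + y + z) * sin x) := by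
    rw [cos_sub_cos, show (y + z + (z + x + (x + y))) / 2 = x + y + z by ring,
      show (y + z - (z + x + (x + y))) / 2 = -x by ring, sin_neg]
    ring
  rw [one_add_div hD, div_right_comm]
  congr 1
  linear_combination (h + cos_add (z + x) (x + y)) / 2

lemma one_sub_cosLaw_div_two (hD : sin (z + x) * sin (x + y) ≠ 0) :
    (1 - (cos (y + z) - cos (z + x) * cos (x + y)) / (sin (z + x) * sin (x + y))) / 2 =
      sin y * sin z / (sin (z + x) * sin (x + y)) := by
  have h : cos (z + x - (x + y)) - cos (y + z) = 2 * (sin y * sin z) := by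
    rw [cos_sub_cos, show (z + x - (x + y) + (y + z)) / 2 = z by ring,
      show (z + x - (x + y) - (y + z)) / 2 = -y by ring, sin_neg]
    ring
  rw [one_sub_div hD, div_right_comm]
  congr 1
  linear_combination (h - cos_sub (z + x) (x + y)) / 2

lemma cos_angleOpposite (hx : 0 < x) (hy : 0 < y) (hz : 0 < z) (hσ : x + y + z ≤ π) :
    cos (angleOpposite (y + z) (z + x) (x + y)) =
      (cos (y + z) - cos (z + x) * cos (x + y)) / (sin (z + x) * sin (x + y)) := by
  have hD : 0 < sin (z + x) * sin (x + y) :=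
    mul_pos (sin_pos_of_pos_of_lt_pi (by linarith) (by linarith))
      (sin_pos_of_pos_of_lt_pi (by linarith) (by linarith))
  have hadd := one_add_cosLaw_div_two hD.ne'
  have hsub := one_sub_cosLaw_div_two hD.ne'
  have := sin_nonneg_of_nonneg_of_le_pi (x := x + y + z) (by linarith) hσ
  have := sin_nonneg_of_nonneg_of_le_pi (x := x) hx.le (by linarith)
  have := sin_nonneg_of_nonneg_of_le_pi (x := y) hy.le (by linarith)
  have := sin_nonneg_of_nonneg_of_le_pi (x := z) hz.le (by linarith)
  have : 0 ≤ sin (x + y + z) * sin x / (sin (z + x) * sin (x + y)) := by positivity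
  have : 0 ≤ sin y * sin z / (sin (z + x) * sin (x + y)) := by positivity
  exact cos_arccos (by linarith) (by linarith)

lemma angleOpposite_mem_Ioo (hx : 0 < x) (hy : 0 < y) (hz : 0 < z) (hσ : x + y + z < π) :
    angleOpposite (y + z) (z + x) (x + y) ∈ Set.Ioo 0 π := by
  have hD : 0 < sin (z + x) * sin (x + y) :=
    mul_pos (sin_pos_of_pos_of_lt_pi (by linarith) (by linarith))
      (sin_pos_of_pos_of_lt_pi (by linarith) (by linarith))
  have hadd := one_add_cosLaw_div_two hD.ne'
  have hsub := one_sub_cosLaw_div_two hD.ne'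
  have := sin_pos_of_pos_of_lt_pi (x := x + y + z) (by linarith) hσ
  have := sin_pos_of_pos_of_lt_pi (x := x) hx (by linarith)
  have := sin_pos_of_pos_of_lt_pi (x := y) hy (by linarith)
  have := sin_pos_of_pos_of_lt_pi (x := z) hz (by linarith)
  have : 0 < sin (x + y + z) * sin x / (sin (z + x) * sin (x + y)) := by positivity
  have : 0 < sin y * sin z / (sin (z + x) * sin (x + y)) := by positivity
  exact ⟨arccos_pos.2 (by linarith), arccos_lt_pi.2 (by linarith)⟩

lemma angleOpposite_eq_pi (hx : 0 < x) (hy : 0 < y) (hz : 0 < z) (hσ : x + y + z = π) :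
    angleOpposite (y + z) (z + x) (x + y) = π := by
  have h := one_add_cosLaw_div_two (x := x) (y := y) (z := z)
    (mul_pos (sin_pos_of_pos_of_lt_pi (by linarith) (by linarith))
      (sin_pos_of_pos_of_lt_pi (by linarith) (by linarith))).ne'
  rw [hσ, sin_pi, zero_mul, zero_div, div_eq_zero_iff, or_iff_left two_ne_zero] at h
  rw [angleOpposite, eq_neg_of_add_eq_zero_right h, arccos_neg_one]

lemma cos_half_angleOpposite (hx : 0 < x) (hy : 0 < y) (hz : 0 < z) (hσ : x + y + z ≤ π) :
    cos (angleOpposite (y + z) (z + x) (x + y) / 2) =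
      √(sin (x + y + z)) * √(sin x) / (√(sin (z + x)) * √(sin (x + y))) := by
  have hzx : 0 < sin (z + x) := sin_pos_of_pos_of_lt_pi (by linarith) (by linarith)
  have hD : 0 < sin (z + x) * sin (x + y) :=
    mul_pos hzx (sin_pos_of_pos_of_lt_pi (by linarith) (by linarith))
  rw [cos_half (by linarith [pi_pos, angleOpposite_nonneg (y + z) (z + x) (x + y)])
      (angleOpposite_le_pi _ _ _), cos_angleOpposite hx hy hz hσ, one_add_cosLaw_div_two hD.ne',
    sqrt_div' _ hD.le, sqrt_mul (sin_nonneg_of_nonneg_of_le_pi (by linarith) hσ), sqrt_mul hzx.le]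

lemma sin_half_angleOpposite (hx : 0 < x) (hy : 0 < y) (hz : 0 < z) (hσ : x + y + z ≤ π) :
    sin (angleOpposite (y + z) (z + x) (x + y) / 2) =
      √(sin y) * √(sin z) / (√(sin (z + x)) * √(sin (x + y))) := by
  have hzx : 0 < sin (z + x) := sin_pos_of_pos_of_lt_pi (by linarith) (by linarith)
  have hD : 0 < sin (z + x) * sin (x + y) :=
    mul_pos hzx (sin_pos_of_pos_of_lt_pi (by linarith) (by linarith))
  rw [sin_half_eq_sqrt (angleOpposite_nonneg _ _ _)
      (by linarith [pi_pos, angleOpposite_le_pi (y + z) (z + x) (x + y)]),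
    cos_angleOpposite hx hy hz hσ, one_sub_cosLaw_div_two hD.ne', sqrt_div' _ hD.le,
    sqrt_mul (sin_pos_of_pos_of_lt_pi hy (by linarith)).le, sqrt_mul hzx.le]

lemma tan_sq_half_angleOpposite (hx : 0 < x) (hy : 0 < y) (hz : 0 < z) (hσ : x + y + z ≤ π) :
    tan (angleOpposite (y + z) (z + x) (x + y) / 2) ^ 2 =
      sin y * sin z / (sin (x + y + z) * sin x) := by
  have hzx : 0 < sin (z + x) := sin_pos_of_pos_of_lt_pi (by linarith) (by linarith)
  have hxy : 0 < sin (x + y) := sin_pos_of_pos_of_lt_pi (by linarith) (by linarith)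
  rw [tan_eq_sin_div_cos, sin_half_angleOpposite hx hy hz hσ, cos_half_angleOpposite hx hy hz hσ]
  simp only [div_pow, mul_pow]
  rw [sq_sqrt (sin_nonneg_of_nonneg_of_le_pi (by linarith) hσ),
    sq_sqrt (sin_pos_of_pos_of_lt_pi hx (by linarith)).le,
    sq_sqrt (sin_pos_of_pos_of_lt_pi hy (by linarith)).le,
    sq_sqrt (sin_pos_of_pos_of_lt_pi hz (by linarith)).le, sq_sqrt hzx.le, sq_sqrt hxy.le]
  field_simp

/-- Delambre's analogy for `sin ((A + B)/2)`. -/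
lemma sin_add_half_angleOpposite (hx : 0 < x) (hy : 0 < y) (hz : 0 < z) (hσ : x + y + z ≤ π) :
    sin ((angleOpposite (y + z) (z + x) (x + y) + angleOpposite (z + x) (x + y) (y + z)) / 2) *
        sin (x + y) =
      cos (angleOpposite (x + y) (y + z) (z + x) / 2) * (sin x + sin y) := by
  rw [add_div, sin_add, sin_half_angleOpposite hx hy hz hσ, cos_half_angleOpposite hx hy hz hσ,
    sin_half_angleOpposite hy hz hx (by linarith), cos_half_angleOpposite hy hz hx (by linarith),
    cos_half_angleOpposite hz hx hy (by linarith), show y + z + x = x + y + z by ring,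
    show z + x + y = x + y + z by ring]
  have hxy : 0 < sin (x + y) := sin_pos_of_pos_of_lt_pi (by linarith) (by linarith)
  have hyz : 0 < sin (y + z) := sin_pos_of_pos_of_lt_pi (by linarith) (by linarith)
  have hzx : 0 < sin (z + x) := sin_pos_of_pos_of_lt_pi (by linarith) (by linarith)
  field_simp
  rw [sq_sqrt (sin_pos_of_pos_of_lt_pi hx (by linarith)).le,
    sq_sqrt (sin_pos_of_pos_of_lt_pi hy (by linarith)).le, sq_sqrt hxy.le]
  ring

/-- Delambre's analogy for `cos ((A + B)/2)`. -/
lemma cos_add_half_angleOpposite (hx : 0 < x) (hy : 0 < y) (hz : 0 < z) (hσ : x + y + z ≤ π) :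
    cos ((angleOpposite (y + z) (z + x) (x + y) + angleOpposite (z + x) (x + y) (y + z)) / 2) *
        sin (x + y) =
      sin (angleOpposite (x + y) (y + z) (z + x) / 2) * (sin (x + y + z) - sin z) := by
  rw [add_div, cos_add, sin_half_angleOpposite hx hy hz hσ, cos_half_angleOpposite hx hy hz hσ,
    sin_half_angleOpposite hy hz hx (by linarith), cos_half_angleOpposite hy hz hx (by linarith),
    sin_half_angleOpposite hz hx hy (by linarith), show y + z + x = x + y + z by ring]
  have hxy : 0 < sin (x + y) := sin_pos_of_pos_of_lt_pi (by linarith) (by linarith)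
  have hyz : 0 < sin (y + z) := sin_pos_of_pos_of_lt_pi (by linarith) (by linarith)
  have hzx : 0 < sin (z + x) := sin_pos_of_pos_of_lt_pi (by linarith) (by linarith)
  field_simp
  rw [sq_sqrt (sin_nonneg_of_nonneg_of_le_pi (by linarith) hσ),
    sq_sqrt (sin_pos_of_pos_of_lt_pi hz (by linarith)).le, sq_sqrt hxy.le]
  ring

end HalfAngle

section Excess

variable {x y z : ℝ}

lemma tan_excess_div_four_mul_tan_half (hx : 0 < x) (hy : 0 < y) (hz : 0 < z)
    (hσ : x + y + z < π) :
    tan ((angleOpposite (y + z) (z + x) (x + y) + angleOpposite (z + x) (x + y) (y + z) +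
        angleOpposite (x + y) (y + z) (z + x) - π) / 4) *
        tan (angleOpposite (x + y) (y + z) (z + x) / 2) =
      sin (x / 2) * sin (y / 2) / (cos ((x + y + z) / 2) * cos (z / 2)) := by
  set A := angleOpposite (y + z) (z + x) (x + y)
  set B := angleOpposite (z + x) (x + y) (y + z)
  set C := angleOpposite (x + y) (y + z) (z + x)
  have hxy : 0 < sin (x + y) := sin_pos_of_pos_of_lt_pi (by linarith) (by linarith)
  have hnum : sin ((A + B) / 2) - sin ((π - C) / 2) =
      cos (C / 2) * (4 * sin (x / 2) * sin (y / 2) * sin ((x + y) / 2)) / sin (x + y) := by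
    rw [← sin_add_sin_sub_sin_add, show (π - C) / 2 = π / 2 - C / 2 by ring, sin_pi_div_two_sub,
      eq_div_iff hxy.ne', sub_mul, sin_add_half_angleOpposite hx hy hz hσ.le]
    ring
  have hden : cos ((A + B) / 2) + cos ((π - C) / 2) =
      sin (C / 2) * (4 * cos ((x + y + z) / 2) * cos (z / 2) * sin ((x + y) / 2)) /
        sin (x + y) := by
    rw [← sin_add_sub_sin_add_sin, show (π - C) / 2 = π / 2 - C / 2 by ring, cos_pi_div_two_sub,
      eq_div_iff hxy.ne', add_mul, cos_add_half_angleOpposite hx hy hz hσ.le]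
    ring
  have hC := angleOpposite_mem_Ioo hz hx hy (by linarith)
  have : 0 < sin (C / 2) := sin_pos_of_pos_of_lt_pi (by linarith [hC.1]) (by linarith [hC.2])
  have : 0 < cos (C / 2) := cos_pos_of_mem_Ioo ⟨by linarith [hC.1], by linarith [hC.2]⟩
  have : 0 < cos ((x + y + z) / 2) := cos_pos_of_mem_Ioo ⟨by linarith, by linarith⟩
  have : 0 < cos (z / 2) := cos_pos_of_mem_Ioo ⟨by linarith, by linarith⟩
  have : 0 < sin ((x + y) / 2) := sin_pos_of_pos_of_lt_pi (by linarith) (by linarith)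
  rw [show (A + B + C - π) / 4 = ((A + B) / 2 - (π - C) / 2) / 2 by ring,
    tan_sub_div_two (by rw [hden]; positivity), hnum, hden, tan_eq_sin_div_cos]
  field_simp

theorem tan_sq_angleOpposite_excess_div_four (hx : 0 < x) (hy : 0 < y) (hz : 0 < z)
    (hσ : x + y + z ≤ π) :
    tan ((angleOpposite (y + z) (z + x) (x + y) + angleOpposite (z + x) (x + y) (y + z) +
        angleOpposite (x + y) (y + z) (z + x) - π) / 4) ^ 2 =
      tan ((x + y + z) / 2) * tan (x / 2) * tan (y / 2) * tan (z / 2) := by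
  rcases hσ.lt_or_eq with hσ | hσ
  swap
  · -- both sides are `tan (π / 2)`, which is `0` in Mathlib
    rw [angleOpposite_eq_pi hx hy hz hσ, angleOpposite_eq_pi hy hz hx (by linarith),
      angleOpposite_eq_pi hz hx hy (by linarith), hσ, show (π + π + π - π) / 4 = π / 2 by ring,
      tan_pi_div_two]
    ring
  have := sin_pos_of_pos_of_lt_pi hx (by linarith)
  have := sin_pos_of_pos_of_lt_pi hy (by linarith)
  have := sin_pos_of_pos_of_lt_pi hz (by linarith)
  have := sin_pos_of_pos_of_lt_pi (by linarith) hσ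
  have hC := tan_sq_half_angleOpposite hz hx hy (by linarith)
  rw [show z + x + y = x + y + z by ring] at hC
  have hC₀ : tan (angleOpposite (x + y) (y + z) (z + x) / 2) ^ 2 ≠ 0 := by
    rw [hC]; positivity
  apply mul_right_cancel₀ hC₀
  rw [← mul_pow, tan_excess_div_four_mul_tan_half hx hy hz hσ, hC]
  have h2 (t : ℝ) : sin t = 2 * sin (t / 2) * cos (t / 2) := by
    rw [← sin_two_mul, mul_div_cancel₀ _ two_ne_zero]
  have : 0 < cos (x / 2) := cos_pos_of_mem_Ioo ⟨by linarith, by linarith⟩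
  have : 0 < cos (y / 2) := cos_pos_of_mem_Ioo ⟨by linarith, by linarith⟩
  have : 0 < cos (z / 2) := cos_pos_of_mem_Ioo ⟨by linarith, by linarith⟩
  have : 0 < cos ((x + y + z) / 2) := cos_pos_of_mem_Ioo ⟨by linarith, by linarith⟩
  have : 0 < sin (z / 2) := sin_pos_of_pos_of_lt_pi (by linarith) (by linarith)
  have : 0 < sin ((x + y + z) / 2) := sin_pos_of_pos_of_lt_pi (by linarith) (by linarith)
  simp only [tan_eq_sin_div_cos, h2 (x + y + z), h2 x, h2 y, h2 z]
  field_simp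

end Excess

theorem lhuilier_general (u v w : EuclideanSpace ℝ (Fin 3))
    (hu : ‖u‖ = 1) (hv : ‖v‖ = 1) (hw : ‖w‖ = 1)
    (a b c s S : ℝ)
    (ha : a = sdist u v) (hb : b = sdist v w) (hc : c = sdist w u)
    (htri₁ : a < b + c) (htri₂ : b < c + a) (htri₃ : c < a + b)
    (hs : s = (a + b + c) / 2)
    (hS : S = sangle w u v + sangle u v w + sangle v w u - π) :
    Real.tan (S / 4) ^ 2 =
      Real.tan (s / 2) * Real.tan ((s - a) / 2) *
        Real.tan ((s - b) / 2) * Real.tan ((s - c) / 2) := by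
  have hper := sdist_add_sdist_add_sdist_le_two_pi hu hv hw
  rw [← ha, ← hb, ← hc] at hper
  obtain ⟨x, y, z, rfl, rfl, rfl⟩ : ∃ x y z : ℝ, a = y + z ∧ b = z + x ∧ c = x + y :=
    ⟨(b + c - a) / 2, (c + a - b) / 2, (a + b - c) / 2, by ring, by ring, by ring⟩
  obtain rfl : s = x + y + z := by rw [hs]; ring
  have hangles : sangle w u v + sangle u v w + sangle v w u =
      angleOpposite (y + z) (z + x) (x + y) + angleOpposite (z + x) (x + y) (y + z) +
        angleOpposite (x + y) (y + z) (z + x) := by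
    rw [sangle, sangle, sangle, sdist_comm w v, sdist_comm u w, sdist_comm v u, ← ha, ← hb, ← hc]
    unfold angleOpposite
    ring
  rw [hS, hangles, show (x + y + z - (y + z)) / 2 = x / 2 by ring,
    show (x + y + z - (z + x)) / 2 = y / 2 by ring, show (x + y + z - (x + y)) / 2 = z / 2 by ring]
  exact tan_sq_angleOpposite_excess_div_four (by linarith) (by linarith) (by linarith)
    (by linarith)

/-- Lhuilier's formula: for a (nondegenerate) spherical triangle contained in an open
hemisphere of the unit sphere, with side lengths `a, b, c`, semiperimeter `s`, and area
`S` equal to the angle excess `α + β + γ - π`, one has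
`tan² (S/4) = tan (s/2) · tan ((s-a)/2) · tan ((s-b)/2) · tan ((s-c)/2)`. -/
theorem lhuilier (u v w : EuclideanSpace ℝ (Fin 3))
    (hu : ‖u‖ = 1) (hv : ‖v‖ = 1) (hw : ‖w‖ = 1)
    (hhemi : ∃ p : EuclideanSpace ℝ (Fin 3), ‖p‖ = 1 ∧
      0 < (inner ℝ p u : ℝ) ∧ 0 < (inner ℝ p v : ℝ) ∧ 0 < (inner ℝ p w : ℝ))
    (a b c s S : ℝ)
    (ha : a = sdist u v) (hb : b = sdist v w) (hc : c = sdist w u)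
    (htri₁ : a < b + c) (htri₂ : b < c + a) (htri₃ : c < a + b)
    (hs : s = (a + b + c) / 2)
    (hS : S = sangle w u v + sangle u v w + sangle v w u - π) :
    Real.tan (S / 4) ^ 2 =
      Real.tan (s / 2) * Real.tan ((s - a) / 2) *
        Real.tan ((s - b) / 2) * Real.tan ((s - c) / 2) :=
  lhuilier_general u v w hu hv hw a b c s S ha hb hc htri₁ htri₂ htri₃ hs hS
end
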